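/- In the Hall-witness setup for a subgraph H of a bipartite graph G, assume S and T are nonempty and m_S > 0. Then μ(H) ≥ (2·d̄(S) / (2·d̄(S) + d̄_S(T)))·μ(G). -/

import Mathlib

open scoped Classical

noncomputable section

variable {V : Type*}

/-- `M` is a matching of `G`: a set of edges of `G` that are pairwise vertex-disjoint. -/
def IsMatchingSet (G : SimpleGraph V) (M : Set (Sym2 V)) : Prop :=
  M ⊆ G.edgeSet ∧ M.Pairwise fun e f => ∀ v : V, v ∈ e → v ∉ f

/-- The set of vertices matched by the edge set `M`. -/
def mVerts (M : Set (Sym2 V)) : Set V := {v | ∃ e ∈ M, v ∈ e}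

/-- The matching number of `G`. -/
def nu (G : SimpleGraph V) : ℕ :=
  sSup {n | ∃ M : Set (Sym2 V), IsMatchingSet G M ∧ M.ncard = n}

/-- The bipartite subgraph of `G` consisting of the edges of `G` with one endpoint in `X`
and the other endpoint in `Y`. -/
def between (G : SimpleGraph V) (X Y : Set V) : SimpleGraph V where
  Adj u v := G.Adj u v ∧ ((u ∈ X ∧ v ∈ Y) ∨ (u ∈ Y ∧ v ∈ X))
  symm := ⟨fun u v h => ⟨h.1.symm, h.2.elim (fun hh => Or.inr ⟨hh.2, hh.1⟩) (fun hh => Or.inl ⟨hh.2, hh.1⟩)⟩⟩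
  loopless := ⟨fun v h => G.loopless.irrefl v h.1⟩

/-- The induced subgraph of `G` on the vertex set `U` (on the same vertex type). -/
def inducedOn (G : SimpleGraph V) (U : Set V) : SimpleGraph V where
  Adj u v := G.Adj u v ∧ u ∈ U ∧ v ∈ U
  symm := ⟨fun u v h => ⟨h.1.symm, h.2.2, h.2.1⟩⟩
  loopless := ⟨fun v h => G.loopless.irrefl v h.1⟩

/-- The degree of `v` in `H`. -/
def deg (H : SimpleGraph V) (v : V) : ℕ := (H.neighborSet v).ncard

/-- `H` is a `(β, βm)`-EDCS of `G`. -/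
def IsEDCS (G H : SimpleGraph V) (β βm : ℝ) : Prop :=
  H ≤ G ∧ (∀ u v, H.Adj u v → (deg H u + deg H v : ℝ) ≤ β) ∧
    (∀ u v, G.Adj u v → ¬ H.Adj u v → βm ≤ (deg H u + deg H v : ℝ))

/-- The neighborhood of a set `A` in `H`. -/
def nbhd (H : SimpleGraph V) (A : Set V) : Set V := {v | ∃ a ∈ A, H.Adj a v}

/-- The edges of `M` with one endpoint in `X` and the other endpoint in `Y`. -/
def crossE (M : Set (Sym2 V)) (X Y : Set V) : Set (Sym2 V) :=
  {e | e ∈ M ∧ ∃ u v, e = s(u, v) ∧ u ∈ X ∧ v ∈ Y}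

/-- `M` is a maximal matching of `G`. -/
def IsMaximalMatching (G : SimpleGraph V) (M : Set (Sym2 V)) : Prop :=
  IsMatchingSet G M ∧ ∀ M' : Set (Sym2 V), IsMatchingSet G M' → M ⊆ M' → M' = M

/-! The Hall witness gives `μ(H) = n - |A| + |B| = |T|`. Every edge of `M*` outside `M̄*` meets
`T`, and the edges of `M*` are disjoint, so `μ(G) = |M*| ≤ |M̄*| + |T| = |S|/2 + |T|`. Finally
`2 d̄(S) / (2 d̄(S) + d̄_S(T)) = 2|T| / (2|T| + |S|)`, which turns this bound into `|T|`. -/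

namespace IsMatchingSet

variable {G : SimpleGraph V} {M : Set (Sym2 V)}

theorem mono {M' : Set (Sym2 V)} (hM : IsMatchingSet G M) (h : M' ⊆ M) : IsMatchingSet G M' :=
  ⟨h.trans hM.1, hM.2.mono h⟩

theorem ncard_mVerts [Finite V] (hM : IsMatchingSet G M) : (mVerts M).ncard = 2 * M.ncard := by
  induction M, M.toFinite using Set.Finite.induction_on with
  | empty => simp [mVerts]
  | @insert e M heM hfin ih =>
    have hdisj : Disjoint {x | x ∈ e} (mVerts M) := by
      refine Set.disjoint_left.mpr fun x hxe ⟨f, hf, hxf⟩ => ?_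
      exact hM.2 (Set.mem_insert e M) (Set.mem_insert_of_mem e hf) (by rintro rfl; exact heM hf)
        x hxe hxf
    have hinsert : mVerts (insert e M) = {x | x ∈ e} ∪ mVerts M := by
      ext x; simp [mVerts]
    have hedge : e ∈ G.edgeSet := hM.1 (Set.mem_insert e M)
    induction e using Sym2.ind with
    | h u v =>
      have hpair : {x | x ∈ s(u, v)} = ({u, v} : Set V) := by ext x; simp
      rw [hinsert, Set.ncard_union_eq hdisj, hpair, Set.ncard_pair (G.mem_edgeSet.1 hedge).ne,
        ih (hM.mono (Set.subset_insert _ M)), Set.ncard_insert_of_notMem heM hfin]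
      ring

theorem ncard_le_of_forall_exists_mem {T : Set V} (hM : IsMatchingSet G M) (hT : T.Finite)
    (hcover : ∀ e ∈ M, ∃ v ∈ T, v ∈ e) : M.ncard ≤ T.ncard := by
  obtain rfl | ⟨e₀, he₀⟩ := M.eq_empty_or_nonempty
  · simp
  have : Nonempty V := let ⟨v, _⟩ := hcover e₀ he₀; ⟨v⟩
  choose! f hfT hfe using hcover
  refine Set.ncard_le_ncard_of_injOn f hfT (fun e he e' he' hff => ?_) hT
  by_contra hne
  exact hM.2 he he' hne (f e) (hfe e he) (hff ▸ hfe e' he')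

end IsMatchingSet

theorem Set.ncard_diff_union_add_ncard [Finite V] {L A B : Set V} (hAL : A ⊆ L)
    (hLB : Disjoint L B) : (L \ A ∪ B).ncard + A.ncard = L.ncard + B.ncard := by
  rw [Set.ncard_union_eq (hLB.mono_left Set.sdiff_subset),
    ← Set.ncard_sdiff_add_ncard_of_subset hAL]
  ring

section HallWitness

variable {G H : SimpleGraph V} {L R A B : Set V} {M : Set (Sym2 V)}

theorem nbhd_subset_right (hbip : ∀ u v, G.Adj u v → (u ∈ L ∧ v ∈ R) ∨ (u ∈ R ∧ v ∈ L))
    (hLR : Disjoint L R) (hHG : H ≤ G) (hAL : A ⊆ L) : nbhd H A ⊆ R := by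
  rintro v ⟨a, ha, hav⟩
  exact ((hbip a v (hHG hav)).resolve_right fun h => hLR.notMem_of_mem_left (hAL ha) h.1).2

theorem exists_mem_of_notMem_crossE {u v : V} (hu : u ∈ L) (hv : v ∈ R) (he : s(u, v) ∈ M)
    (hne : s(u, v) ∉ crossE M A (R \ B)) : ∃ w ∈ L \ A ∪ B, w ∈ s(u, v) := by
  by_cases huA : u ∈ A
  · by_cases hvB : v ∈ B
    · exact ⟨v, Or.inr hvB, Sym2.mem_mk_right u v⟩
    · exact (hne ⟨he, u, v, rfl, huA, hv, hvB⟩).elim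
  · exact ⟨u, Or.inl ⟨hu, huA⟩, Sym2.mem_mk_left u v⟩

theorem exists_mem_of_mem_diff_crossE
    (hbip : ∀ u v, G.Adj u v → (u ∈ L ∧ v ∈ R) ∨ (u ∈ R ∧ v ∈ L)) (hM : M ⊆ G.edgeSet)
    {e : Sym2 V} (he : e ∈ M \ crossE M A (R \ B)) : ∃ w ∈ L \ A ∪ B, w ∈ e := by
  induction e using Sym2.ind with
  | h u v =>
    rcases hbip u v (hM he.1) with ⟨hu, hv⟩ | ⟨hu, hv⟩
    · exact exists_mem_of_notMem_crossE hu hv he.1 he.2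
    · rw [Sym2.eq_swap] at he ⊢
      exact exists_mem_of_notMem_crossE hv hu he.1 he.2

theorem IsMatchingSet.two_mul_ncard_le [Finite V]
    (hbip : ∀ u v, G.Adj u v → (u ∈ L ∧ v ∈ R) ∨ (u ∈ R ∧ v ∈ L)) (hM : IsMatchingSet G M) :
    2 * M.ncard ≤ (mVerts (crossE M A (R \ B))).ncard + 2 * (L \ A ∪ B).ncard := by
  have hsub : crossE M A (R \ B) ⊆ M := fun e he => he.1
  have hrest : (M \ crossE M A (R \ B)).ncard ≤ (L \ A ∪ B).ncard :=
    (hM.mono Set.sdiff_subset).ncard_le_of_forall_exists_mem (Set.toFinite _)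
      fun e he => exists_mem_of_mem_diff_crossE hbip hM.1 he
  rw [(hM.mono hsub).ncard_mVerts, ← Set.ncard_sdiff_add_ncard_of_subset hsub]
  omega

end HallWitness

theorem two_mul_div_mul_le {s t m x : ℝ} (hs : 0 < s) (ht : 0 < t) (hm : 0 < m)
    (hx : 2 * x ≤ s + 2 * t) : 2 * (m / s) / (2 * (m / s) + m / t) * x ≤ t := by
  have hratio : 2 * (m / s) / (2 * (m / s) + m / t) = 2 * t / (2 * t + s) := by
    field_simp
  rw [hratio, div_mul_eq_mul_div, div_le_iff₀ (by positivity)]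
  nlinarith

theorem hall_witness_nu_ratio_general [Fintype V]
(G H : SimpleGraph V) (L R : Set V) (n : ℕ)
    (hbipE : ∀ u v, G.Adj u v → (u ∈ L ∧ v ∈ R) ∨ (u ∈ R ∧ v ∈ L))
    (hdisj : Disjoint L R)
    (hLcard : L.ncard = n)
    (hHG : H ≤ G)
    (A : Set V) (hAL : A ⊆ L)
    (hwit : A.ncard + nu H = n + (nbhd H A).ncard)
    (Mstar : Set (Sym2 V)) (hMstar : IsMatchingSet G Mstar) (hMstarMax : Mstar.ncard = nu G)
    (Mbar : Set (Sym2 V)) (hMbar : Mbar = crossE Mstar A (R \ nbhd H A))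
    (S : Set V) (hS : S = mVerts Mbar)
(T : Set V) (hT : T = (L \ A) ∪ nbhd H A)
    (hSne : S.Nonempty) (hTne : T.Nonempty)
    (mS : ℕ) (hmS0 : 0 < mS)
    (dbarS dbarT : ℝ)
    (hdbarS : dbarS = (mS : ℝ) / S.ncard) (hdbarT : dbarT = (mS : ℝ) / T.ncard) :
    (2 * dbarS / (2 * dbarS + dbarT)) * nu G ≤ (nu H : ℝ) := by
  have hnuH : T.ncard = nu H := by
    rw [hT]
    have := Set.ncard_diff_union_add_ncard hAL
      (hdisj.mono_right (nbhd_subset_right hbipE hdisj hHG hAL))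
    omega
  have hnuG : 2 * nu G ≤ S.ncard + 2 * T.ncard := by
    rw [← hMstarMax, hS, hMbar, hT]
    exact hMstar.two_mul_ncard_le hbipE
  rw [hdbarS, hdbarT, ← hnuH]
  exact two_mul_div_mul_le (mod_cast hSne.ncard_pos) (mod_cast hTne.ncard_pos) (mod_cast hmS0)
    (mod_cast hnuG)

/-- In the Hall-witness setup, `μ(H) ≥ (2·d̄(S) / (2·d̄(S) + d̄_S(T)))·μ(G)`. -/
theorem hall_witness_nu_ratio [Fintype V]
(G H : SimpleGraph V) (L R : Set V) (n : ℕ)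
    (hbipE : ∀ u v, G.Adj u v → (u ∈ L ∧ v ∈ R) ∨ (u ∈ R ∧ v ∈ L))
    (hdisj : Disjoint L R) (hcover : L ∪ R = Set.univ)
    (hLcard : L.ncard = n) (hRcard : R.ncard = n)
    (hHG : H ≤ G)
    (A : Set V) (hAL : A ⊆ L)
    (hwit : A.ncard + nu H = n + (nbhd H A).ncard)
    (Mstar : Set (Sym2 V)) (hMstar : IsMatchingSet G Mstar) (hMstarMax : Mstar.ncard = nu G)
    (Mbar : Set (Sym2 V)) (hMbar : Mbar = crossE Mstar A (R \ nbhd H A))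
    (S : Set V) (hS : S = mVerts Mbar)
(T : Set V) (hT : T = (L \ A) ∪ nbhd H A)
    (hSne : S.Nonempty) (hTne : T.Nonempty)
    (mS : ℕ) (hmS : mS = (between H S T).edgeSet.ncard) (hmS0 : 0 < mS)
    (dbarS dbarT : ℝ)
    (hdbarS : dbarS = (mS : ℝ) / S.ncard) (hdbarT : dbarT = (mS : ℝ) / T.ncard) :
    (2 * dbarS / (2 * dbarS + dbarT)) * nu G ≤ (nu H : ℝ) :=
  hall_witness_nu_ratio_general G H L R n hbipE hdisj hLcard hHG A hAL hwit Mstar hMstar hMstarMax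
    Mbar hMbar S hS T hT hSne hTne mS hmS0 dbarS dbarT hdbarS hdbarT
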